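/- arXiv:2410.19024 — 4 statements merged into one kernel-verified Lean document; each statement's English description precedes it below -/
import Mathlib

section
/- Let S ∈ ℝ^n be nonzero with positive entries, N > 0, and U defined by u_k = ⌊N·s_k/‖S‖⌋ with U ≠ 0. Then (1 − n/N²)·(N/‖U‖) + ‖U‖/N ≤ 2·(SᵀU)/(‖S‖·‖U‖) ≤ 2. -/
/-!
Put `x = (N / ‖S‖) • S`, so that `‖x‖ = N` and `U` is the coordinatewise floor of `x`.
Each coordinate of `x - U` is a fractional part, hence `‖x - U‖² ≤ n`; expanding the square gives
`N² + ‖U‖² - n ≤ 2 (N / ‖S‖) ⟪S, U⟫`, which after division by `N ‖U‖` is the lower bound.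
The upper bound is Cauchy–Schwarz.
-/

open RealInnerProductSpace

lemma EuclideanSpace.norm_sub_sq_le_card_of_eq_floor {ι : Type*} [Fintype ι]
    {x u : EuclideanSpace ℝ ι} (hu : ∀ k, u k = ⌊x k⌋) :
    ‖x - u‖ ^ 2 ≤ Fintype.card ι := by
  rw [EuclideanSpace.norm_sq_eq]
  calc ∑ k, ‖(x - u) k‖ ^ 2 ≤ ∑ _k : ι, (1 : ℝ) := by
        gcongr with k
        have hfract : (x - u) k = Int.fract (x k) := by rw [PiLp.sub_apply, hu k, Int.fract]
        rw [hfract, Real.norm_of_nonneg (Int.fract_nonneg _)]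
        exact pow_le_one₀ (Int.fract_nonneg _) (Int.fract_lt_one _).le
    _ = Fintype.card ι := by simp

lemma le_two_mul_inner_div_of_norm_smul_sub_sq_le {E : Type*} [NormedAddCommGroup E]
    [InnerProductSpace ℝ E] {s u : E} {N m : ℝ} (hN : 0 < N) (hs : s ≠ 0) (hu : u ≠ 0)
    (h : ‖(N / ‖s‖) • s - u‖ ^ 2 ≤ m) :
    (1 - m / N ^ 2) * (N / ‖u‖) + ‖u‖ / N ≤ 2 * ⟪s, u⟫ / (‖s‖ * ‖u‖) := by
  have hs' : 0 < ‖s‖ := norm_pos_iff.mpr hs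
  have hu' : 0 < ‖u‖ := norm_pos_iff.mpr hu
  have hexpand : N ^ 2 + ‖u‖ ^ 2 - m ≤ 2 * N * ⟪s, u⟫ / ‖s‖ := by
    rw [norm_sub_sq_real, real_inner_smul_left, norm_smul, Real.norm_of_nonneg (by positivity),
      div_mul_cancel₀ _ hs'.ne'] at h
    rw [mul_div_right_comm, mul_div_assoc]
    linarith
  calc (1 - m / N ^ 2) * (N / ‖u‖) + ‖u‖ / N = (N ^ 2 + ‖u‖ ^ 2 - m) / (N * ‖u‖) := by
        field_simp
        ring
    _ ≤ (2 * N * ⟪s, u⟫ / ‖s‖) / (N * ‖u‖) := by gcongr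
    _ = 2 * ⟪s, u⟫ / (‖s‖ * ‖u‖) := by
        field_simp

lemma two_mul_real_inner_div_norm_mul_norm_le_two {E : Type*} [NormedAddCommGroup E]
    [InnerProductSpace ℝ E] (s u : E) : 2 * ⟪s, u⟫ / (‖s‖ * ‖u‖) ≤ 2 := by
  have := (le_abs_self _).trans (abs_real_inner_div_norm_mul_norm_le_one s u)
  rw [mul_div_assoc]
  linarith

theorem stmt_1_general (n : ℕ) (N : ℝ) (hN : 0 < N)
    (S U : EuclideanSpace ℝ (Fin n))
    (hU : ∀ k, U k = ⌊N * S k / ‖S‖⌋) (hU0 : U ≠ 0) :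
    (1 - (n : ℝ) / N ^ 2) * (N / ‖U‖) + ‖U‖ / N ≤
      2 * (∑ k, S k * U k) / (‖S‖ * ‖U‖) ∧
    2 * (∑ k, S k * U k) / (‖S‖ * ‖U‖) ≤ 2 := by
  have hS : S ≠ 0 := by
    rintro rfl
    exact hU0 (by ext k; simp [hU])
  have hinner : ∑ k, S k * U k = ⟪S, U⟫ := by simp [PiLp.inner_apply, mul_comm]
  have hfloor : ∀ k, U k = ⌊((N / ‖S‖) • S) k⌋ := fun k => by
    simp [hU k, mul_div_right_comm]
  have hdist := EuclideanSpace.norm_sub_sq_le_card_of_eq_floor hfloor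
  rw [Fintype.card_fin] at hdist
  rw [hinner]
  exact ⟨le_two_mul_inner_div_of_norm_smul_sub_sq_le hN hS hU0 hdist,
    two_mul_real_inner_div_norm_mul_norm_le_two S U⟩

theorem stmt_1 (n : ℕ) (N : ℝ) (hN : 0 < N)
    (S U : EuclideanSpace ℝ (Fin n)) (hS : S ≠ 0) (hSpos : ∀ k, 0 < S k)
    (hU : ∀ k, U k = ⌊N * S k / ‖S‖⌋) (hU0 : U ≠ 0) :
    (1 - (n : ℝ) / N ^ 2) * (N / ‖U‖) + ‖U‖ / N ≤
      2 * (∑ k, S k * U k) / (‖S‖ * ‖U‖) ∧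
    2 * (∑ k, S k * U k) / (‖S‖ * ‖U‖) ≤ 2 :=
  stmt_1_general n N hN S U hU hU0
end

section
/- Let C ∈ ℝ^n, S a unit vector, ρ > 0, R = √(ρ² + n/4), C' = C − ρS. Suppose x ∈ ℝ^n with ‖x − C‖ ≤ √n/2 satisfies |Sᵀ(x − C)| ≤ ε/2. Then |‖x − C'‖ − R| ≤ ε/2 + n/(8ρ). -/
/-!
Write `y = x - C` and `t = ⟪S, y⟫`, so that `x - C' = y + ρ S` and
`‖x - C'‖² = ‖y‖² + 2ρt + ρ² ≤ R² + 2ρt`. If `‖x - C'‖ > R` then necessarily `t > 0`, both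
norms are at least `ρ`, and dividing by `‖x - C'‖ + R ≥ 2ρ` gives `‖x - C'‖ - R ≤ t`.
Conversely Cauchy–Schwarz gives `‖x - C'‖ ≥ ⟪S, x - C'⟫ = t + ρ`, while
`R ≤ ρ + (n/4)/(2ρ)` by concavity of the square root.
-/

open RealInnerProductSpace

lemma Real.sqrt_sq_add_le {ρ a : ℝ} (hρ : 0 < ρ) (ha : 0 ≤ a) :
    √(ρ ^ 2 + a) ≤ ρ + a / (2 * ρ) := by
  rw [Real.sqrt_le_iff]
  refine ⟨by positivity, ?_⟩
  have : (ρ + a / (2 * ρ)) ^ 2 = ρ ^ 2 + a + (a / (2 * ρ)) ^ 2 := by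
    field_simp
    ring
  nlinarith [sq_nonneg (a / (2 * ρ))]

section UnitVector

variable {E : Type*} [NormedAddCommGroup E] [InnerProductSpace ℝ E] {S : E} (hS : ‖S‖ = 1)
  (y : E) (ρ : ℝ)
include hS

lemma norm_add_smul_unit_sq : ‖y + ρ • S‖ ^ 2 = ‖y‖ ^ 2 + 2 * ρ * ⟪S, y⟫ + ρ ^ 2 := by
  rw [norm_add_sq_real, real_inner_smul_right, real_inner_comm, norm_smul, mul_pow, hS,
    Real.norm_eq_abs, sq_abs]
  ring

lemma inner_add_le_norm_add_smul_unit : ⟪S, y⟫ + ρ ≤ ‖y + ρ • S‖ := by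
  have h := real_inner_le_norm S (y + ρ • S)
  rwa [inner_add_right, real_inner_smul_right, real_inner_self_eq_norm_sq, hS, one_pow,
    mul_one, one_mul] at h

variable {y ρ} {a : ℝ} (hy : ‖y‖ ^ 2 ≤ a)
include hy

lemma norm_add_smul_unit_sub_sqrt_le (hρ : 0 ≤ ρ) : ‖y + ρ • S‖ - √(ρ ^ 2 + a) ≤ |⟪S, y⟫| := by
  have ha : 0 ≤ a := (sq_nonneg _).trans hy
  set A := ‖y + ρ • S‖
  set R := √(ρ ^ 2 + a)
  have hA2 : A ^ 2 ≤ R ^ 2 + 2 * ρ * ⟪S, y⟫ := by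
    rw [norm_add_smul_unit_sq hS, Real.sq_sqrt (by positivity)]
    linarith
  have hAt := inner_add_le_norm_add_smul_unit hS y ρ
  have hρR : ρ ≤ R := Real.le_sqrt_of_sq_le (by nlinarith [sq_nonneg ‖y‖])
  rcases le_or_gt ⟪S, y⟫ 0 with ht | ht
  · have hAR : A ≤ R := by nlinarith [norm_nonneg (y + ρ • S), Real.sqrt_nonneg (ρ ^ 2 + a)]
    linarith [abs_nonneg ⟪S, y⟫]
  · rw [abs_of_pos ht]
    by_contra! h
    nlinarith

lemma sqrt_sub_norm_add_smul_unit_le (hρ : 0 < ρ) :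
    √(ρ ^ 2 + a) - ‖y + ρ • S‖ ≤ |⟪S, y⟫| + a / (2 * ρ) := by
  have hR := Real.sqrt_sq_add_le hρ ((sq_nonneg _).trans hy)
  have hA := inner_add_le_norm_add_smul_unit hS y ρ
  linarith [neg_abs_le ⟪S, y⟫]

lemma abs_norm_add_smul_unit_sub_sqrt_le (hρ : 0 < ρ) :
    |‖y + ρ • S‖ - √(ρ ^ 2 + a)| ≤ |⟪S, y⟫| + a / (2 * ρ) := by
  have hupper := norm_add_smul_unit_sub_sqrt_le hS hy hρ.le
  have hlower := sqrt_sub_norm_add_smul_unit_le hS hy hρ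
  have : 0 ≤ a / (2 * ρ) := div_nonneg ((sq_nonneg _).trans hy) (by positivity)
  rw [abs_le]
  constructor <;> linarith

end UnitVector

theorem stmt_9_general (n : ℕ) (C S x : EuclideanSpace ℝ (Fin n)) (hS : ‖S‖ = 1)
    (ρ : ℝ) (hρ : 0 < ρ) (R : ℝ) (hR : R = Real.sqrt (ρ ^ 2 + n / 4))
    (C' : EuclideanSpace ℝ (Fin n)) (hC' : C' = C - ρ • S)
    (ε : ℝ)
    (hx : ‖x - C‖ ≤ Real.sqrt n / 2) (hnear : |∑ k, S k * (x k - C k)| ≤ ε / 2) :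
    |‖x - C'‖ - R| ≤ ε / 2 + n / (8 * ρ) := by
  have hxC' : x - C' = (x - C) + ρ • S := by rw [hC']; abel
  have hinner : ⟪S, x - C⟫ = ∑ k, S k * (x k - C k) := by
    simp [PiLp.inner_apply, mul_comm]
  have hy : ‖x - C‖ ^ 2 ≤ n / 4 := by
    calc ‖x - C‖ ^ 2 ≤ (Real.sqrt n / 2) ^ 2 := pow_le_pow_left₀ (norm_nonneg _) hx 2
      _ = n / 4 := by rw [div_pow, Real.sq_sqrt n.cast_nonneg]; norm_num
  have key := abs_norm_add_smul_unit_sub_sqrt_le hS hy hρ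
  rw [← hxC', ← hR, hinner] at key
  calc |‖x - C'‖ - R| ≤ |∑ k, S k * (x k - C k)| + n / 4 / (2 * ρ) := key
    _ = |∑ k, S k * (x k - C k)| + n / (8 * ρ) := by rw [div_div]; ring_nf
    _ ≤ ε / 2 + n / (8 * ρ) := by gcongr

theorem stmt_9 (n : ℕ) (C S x : EuclideanSpace ℝ (Fin n)) (hS : ‖S‖ = 1)
    (ρ : ℝ) (hρ : 0 < ρ) (R : ℝ) (hR : R = Real.sqrt (ρ ^ 2 + n / 4))
    (C' : EuclideanSpace ℝ (Fin n)) (hC' : C' = C - ρ • S)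
    (ε : ℝ) (hε : 0 < ε)
    (hx : ‖x - C‖ ≤ Real.sqrt n / 2) (hnear : |∑ k, S k * (x k - C k)| ≤ ε / 2) :
    |‖x - C'‖ - R| ≤ ε / 2 + n / (8 * ρ) :=
  stmt_9_general n C S x hS ρ hρ R hR C' hC' ε hx hnear
end

section
/- Let C ∈ ℝ^n, S a unit vector, ρ > 0, R = √(ρ² + n/4), C' = C − ρS. Suppose x ∈ ℝ^n with ‖x − C‖ ≤ √n/2 satisfies |‖x − C'‖ − R| ≤ δ/2. Then |Sᵀ(x − C)| ≤ δ/2 + n/(8ρ). -/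
/-!
Put `v = x - C`, `t = ⟪S, v⟫` and `r = √n / 2`, so `R = √(ρ² + r²)`. Upper bound:
`t + ρ = ⟪S, v + ρ • S⟫ ≤ ‖v + ρ • S‖ ≤ R + δ / 2` and `R ≤ ρ + r² / (2ρ)`. Lower bound:
`‖v + ρ • S‖ ≥ max 0 (ρ - δ / 2)` gives `‖v + ρ • S‖² ≥ ρ² - ρδ`, while
`‖v + ρ • S‖² = ‖v‖² + 2ρt + ρ² ≤ r² + 2ρt + ρ²`.
-/

open RealInnerProductSpace

theorem Real.sqrt_sq_add_le_add_div {ρ m : ℝ} (hρ : 0 < ρ) (hm : 0 ≤ m) :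
    √(ρ ^ 2 + m) ≤ ρ + m / (2 * ρ) := by
  have hq : 0 ≤ m / (2 * ρ) := by positivity
  rw [Real.sqrt_le_left (by positivity)]
  have hcancel : m / (2 * ρ) * (2 * ρ) = m := div_mul_cancel₀ m (by positivity)
  nlinarith [sq_nonneg (m / (2 * ρ))]

section ShiftedSphere

variable {E : Type*} [NormedAddCommGroup E] [InnerProductSpace ℝ E] {S v : E} {ρ r δ : ℝ}

theorem norm_add_smul_sq_of_norm_eq_one (hS : ‖S‖ = 1) (v : E) (ρ : ℝ) :
    ‖v + ρ • S‖ ^ 2 = ‖v‖ ^ 2 + 2 * ρ * ⟪S, v⟫ + ρ ^ 2 := by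
  rw [norm_add_sq_real, real_inner_smul_right, real_inner_comm, norm_smul, hS, mul_one,
    Real.norm_eq_abs, sq_abs]
  ring

theorem inner_add_le_norm_add_smul (hS : ‖S‖ = 1) (v : E) (ρ : ℝ) :
    ⟪S, v⟫ + ρ ≤ ‖v + ρ • S‖ := by
  have h := real_inner_le_norm S (v + ρ • S)
  rwa [inner_add_right, real_inner_smul_right, real_inner_self_eq_norm_sq, hS, one_pow, mul_one,
    one_mul] at h

theorem inner_le_of_norm_add_smul_le (hS : ‖S‖ = 1) (hρ : 0 < ρ)
    (h : ‖v + ρ • S‖ ≤ √(ρ ^ 2 + r ^ 2) + δ / 2) : ⟪S, v⟫ ≤ δ / 2 + r ^ 2 / (2 * ρ) := by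
  have hsqrt := Real.sqrt_sq_add_le_add_div hρ (sq_nonneg r)
  linarith [inner_add_le_norm_add_smul hS v ρ]

theorem neg_le_inner_of_le_norm_add_smul (hS : ‖S‖ = 1) (hρ : 0 < ρ) (hv : ‖v‖ ≤ r)
    (h : ρ - δ / 2 ≤ ‖v + ρ • S‖) : -(δ / 2 + r ^ 2 / (2 * ρ)) ≤ ⟪S, v⟫ := by
  set D := ‖v + ρ • S‖
  have hD : 0 ≤ D := norm_nonneg _
  have hD2 : ρ ^ 2 - ρ * δ ≤ D ^ 2 := by
    rcases le_total (δ / 2) ρ with hδρ | hρδ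
    · nlinarith [sq_nonneg (δ / 2)]
    · nlinarith
  have hv2 : ‖v‖ ^ 2 ≤ r ^ 2 := pow_le_pow_left₀ (norm_nonneg v) hv 2
  have hexp := norm_add_smul_sq_of_norm_eq_one hS v ρ
  rw [neg_le, ← sub_nonneg]
  have hcancel : r ^ 2 / (2 * ρ) * (2 * ρ) = r ^ 2 := div_mul_cancel₀ _ (by positivity)
  nlinarith

theorem abs_inner_sub_le_of_mem_shell (C x : E) (hS : ‖S‖ = 1) (hρ : 0 < ρ)
    (hx : ‖x - C‖ ≤ r) (hshell : |‖x - (C - ρ • S)‖ - √(ρ ^ 2 + r ^ 2)| ≤ δ / 2) :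
    |⟪S, x - C⟫| ≤ δ / 2 + r ^ 2 / (2 * ρ) := by
  have hxC : x - (C - ρ • S) = (x - C) + ρ • S := by abel
  rw [hxC, abs_le] at hshell
  have hρR : ρ ≤ √(ρ ^ 2 + r ^ 2) :=
    Real.le_sqrt_of_sq_le (le_add_of_nonneg_right (sq_nonneg r))
  exact abs_le.mpr
    ⟨neg_le_inner_of_le_norm_add_smul hS hρ hx (by linarith),
      inner_le_of_norm_add_smul_le hS hρ (by linarith)⟩

end ShiftedSphere

theorem stmt_10_general (n : ℕ) (C S x : EuclideanSpace ℝ (Fin n)) (hS : ‖S‖ = 1)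
    (ρ : ℝ) (hρ : 0 < ρ) (R : ℝ) (hR : R = Real.sqrt (ρ ^ 2 + n / 4))
    (C' : EuclideanSpace ℝ (Fin n)) (hC' : C' = C - ρ • S)
    (δ : ℝ)
    (hx : ‖x - C‖ ≤ Real.sqrt n / 2) (hshell : |‖x - C'‖ - R| ≤ δ / 2) :
    |∑ k, S k * (x k - C k)| ≤ δ / 2 + n / (8 * ρ) := by
  have hr2 : (Real.sqrt n / 2) ^ 2 = n / 4 := by
    rw [div_pow, Real.sq_sqrt n.cast_nonneg]
    norm_num
  have hsum : ∑ k, S k * (x k - C k) = ⟪S, x - C⟫ := by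
    simp [PiLp.inner_apply, mul_comm]
  have hbound := abs_inner_sub_le_of_mem_shell C x hS hρ hx (by rwa [hr2, ← hR, ← hC'])
  rw [hsum]
  convert hbound using 2
  rw [hr2]
  ring

theorem stmt_10 (n : ℕ) (C S x : EuclideanSpace ℝ (Fin n)) (hS : ‖S‖ = 1)
    (ρ : ℝ) (hρ : 0 < ρ) (R : ℝ) (hR : R = Real.sqrt (ρ ^ 2 + n / 4))
    (C' : EuclideanSpace ℝ (Fin n)) (hC' : C' = C - ρ • S)
    (δ : ℝ) (hδ : 0 < δ)
    (hx : ‖x - C‖ ≤ Real.sqrt n / 2) (hshell : |‖x - C'‖ - R| ≤ δ / 2) :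
    |∑ k, S k * (x k - C k)| ≤ δ / 2 + n / (8 * ρ) :=
  stmt_10_general n C S x hS ρ hρ R hR C' hC' δ hx hshell
end

section
/- Let S ∈ ℝ^n with positive integer entries and P ∈ {0,1}^n with Sᵀ(P − ½·1) = 0 (a solution of the partition problem). Let U ∈ ℝ^n be any nonzero vector with nonnegative entries and let c_a = SᵀU/(‖S‖‖U‖), d* = (√n/2)·√(1 − c_a²). Then there exists d ∈ [−d*, d*] such that Uᵀ·P = (Uᵀ·1)/2 + d·‖U‖; in particular |Uᵀ·P − (Uᵀ·1)/2| ≤ d*·‖U‖. -/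
/-!
Put `w = P - ½·𝟙`. The partition condition says `w ⊥ S`, and since `P` is a 0/1 vector every
coordinate of `w` is `±½`, so `‖w‖ = √n / 2`. Hence `Uᵀ P - (Uᵀ 𝟙)/2 = ⟪U, w⟫` only sees the
component of `U` orthogonal to `S`, whose norm is `‖U‖ √(1 - c_a²)`; Cauchy–Schwarz finishes.
-/

open RealInnerProductSpace

section InnerProductSpace

variable {E : Type*} [NormedAddCommGroup E] [InnerProductSpace ℝ E]

/-- The division by `‖S‖ ^ 2` and `‖S‖ * ‖U‖` makes this true also when `S = 0` or `U = 0`. -/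
lemma norm_sub_proj_sq (S U : E) :
    ‖U - (⟪S, U⟫ / ‖S‖ ^ 2) • S‖ ^ 2 = ‖U‖ ^ 2 * (1 - (⟪S, U⟫ / (‖S‖ * ‖U‖)) ^ 2) := by
  rcases eq_or_ne S 0 with rfl | hS
  · simp
  rcases eq_or_ne U 0 with rfl | hU
  · simp
  have hS' : ‖S‖ ≠ 0 := norm_ne_zero_iff.mpr hS
  have hU' : ‖U‖ ≠ 0 := norm_ne_zero_iff.mpr hU
  rw [norm_sub_sq_real, real_inner_smul_right, norm_smul, Real.norm_eq_abs, mul_pow, sq_abs,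
    real_inner_comm U S]
  field_simp
  ring

lemma abs_inner_le_of_inner_eq_zero {S U w : E} (hSw : ⟪S, w⟫ = 0) :
    |⟪U, w⟫| ≤ ‖U‖ * √(1 - (⟪S, U⟫ / (‖S‖ * ‖U‖)) ^ 2) * ‖w‖ := by
  set V := U - (⟪S, U⟫ / ‖S‖ ^ 2) • S
  have hUV : ⟪U, w⟫ = ⟪V, w⟫ := by
    rw [inner_sub_left, real_inner_smul_left, hSw, mul_zero, sub_zero]
  have hV : ‖V‖ = ‖U‖ * √(1 - (⟪S, U⟫ / (‖S‖ * ‖U‖)) ^ 2) := by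
    rw [← Real.sqrt_sq (norm_nonneg V), norm_sub_proj_sq, Real.sqrt_mul (sq_nonneg _),
      Real.sqrt_sq (norm_nonneg U)]
  rw [hUV, ← hV]
  exact abs_real_inner_le_norm V w

end InnerProductSpace

lemma EuclideanSpace.real_inner_eq_sum {ι : Type*} [Fintype ι] (x y : EuclideanSpace ℝ ι) :
    ⟪x, y⟫ = ∑ k, x k * y k := by
  simp [PiLp.inner_apply, mul_comm]

lemma exists_mem_Icc_eq_mul_of_abs_le {x r a : ℝ} (hr : 0 ≤ r) (ha : 0 ≤ a) (h : |x| ≤ r * a) :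
    ∃ d ∈ Set.Icc (-r) r, x = d * a := by
  rcases ha.eq_or_lt with rfl | ha
  · exact ⟨0, ⟨by simpa using hr, hr⟩, by simpa using h⟩
  refine ⟨x / a, abs_le.mp ?_, (div_mul_cancel₀ x ha.ne').symm⟩
  rwa [abs_div, abs_of_pos ha, div_le_iff₀ ha]

section HalfCentered

variable {ι : Type*} [Fintype ι]

noncomputable def halfCentered (P : EuclideanSpace ℝ ι) : EuclideanSpace ℝ ι :=
  WithLp.toLp 2 fun k => P k - 1 / 2

lemma norm_halfCentered {P : EuclideanSpace ℝ ι} (hP : ∀ k, P k = 0 ∨ P k = 1) :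
    ‖halfCentered P‖ = √(Fintype.card ι) / 2 := by
  have hsq : ∀ k, halfCentered P k * halfCentered P k = 1 / 4 := fun k => by
    rcases hP k with h | h <;> norm_num [halfCentered, h]
  have hinner : ⟪halfCentered P, halfCentered P⟫ = Fintype.card ι / 4 := by
    simp only [EuclideanSpace.real_inner_eq_sum, hsq, Finset.sum_const, Finset.card_univ,
      nsmul_eq_mul]
    ring
  rw [← Real.sqrt_sq (norm_nonneg _), ← real_inner_self_eq_norm_sq, hinner, Real.sqrt_div' _ zero_le_four,
    show (4 : ℝ) = 2 ^ 2 by norm_num, Real.sqrt_sq zero_le_two]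

lemma real_inner_halfCentered (U P : EuclideanSpace ℝ ι) :
    ⟪U, halfCentered P⟫ = ∑ k, U k * P k - (∑ k, U k) / 2 := by
  simp only [EuclideanSpace.real_inner_eq_sum, halfCentered, mul_sub, Finset.sum_sub_distrib,
    Finset.sum_div, mul_one_div]

end HalfCentered

theorem stmt_14_general (n : ℕ) (S U P : EuclideanSpace ℝ (Fin n))
    (hP : ∀ k, P k = 0 ∨ P k = 1)
    (hsol : ∑ k, S k * (P k - 1 / 2) = 0)
    (ca ds : ℝ) (hca : ca = (∑ k, S k * U k) / (‖S‖ * ‖U‖))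
    (hds : ds = (Real.sqrt n / 2) * Real.sqrt (1 - ca ^ 2)) :
    (∃ d ∈ Set.Icc (-ds) ds, ∑ k, U k * P k = (∑ k, U k) / 2 + d * ‖U‖) ∧
    |∑ k, U k * P k - (∑ k, U k) / 2| ≤ ds * ‖U‖ := by
  have hSw : ⟪S, halfCentered P⟫ = 0 := by
    simpa only [EuclideanSpace.real_inner_eq_sum, halfCentered, PiLp.toLp_apply] using hsol
  have hbound : |∑ k, U k * P k - (∑ k, U k) / 2| ≤ ds * ‖U‖ := by
    rw [← real_inner_halfCentered]
    calc |⟪U, halfCentered P⟫|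
        ≤ ‖U‖ * √(1 - (⟪S, U⟫ / (‖S‖ * ‖U‖)) ^ 2) * ‖halfCentered P‖ :=
          abs_inner_le_of_inner_eq_zero hSw
      _ = ds * ‖U‖ := by
          rw [norm_halfCentered hP, Fintype.card_fin, hds, hca,
            EuclideanSpace.real_inner_eq_sum]
          ring
  refine ⟨?_, hbound⟩
  obtain ⟨d, hd, hdU⟩ := exists_mem_Icc_eq_mul_of_abs_le (by rw [hds]; positivity)
    (norm_nonneg U) hbound
  exact ⟨d, hd, by linarith⟩

theorem stmt_14 (n : ℕ) (S U P : EuclideanSpace ℝ (Fin n))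
    (hSint : ∀ k, ∃ m : ℕ, 0 < m ∧ S k = m)
    (hP : ∀ k, P k = 0 ∨ P k = 1)
    (hsol : ∑ k, S k * (P k - 1 / 2) = 0)
    (hU0 : U ≠ 0) (hUpos : ∀ k, 0 ≤ U k)
    (ca ds : ℝ) (hca : ca = (∑ k, S k * U k) / (‖S‖ * ‖U‖))
    (hds : ds = (Real.sqrt n / 2) * Real.sqrt (1 - ca ^ 2)) :
    (∃ d ∈ Set.Icc (-ds) ds, ∑ k, U k * P k = (∑ k, U k) / 2 + d * ‖U‖) ∧
    |∑ k, U k * P k - (∑ k, U k) / 2| ≤ ds * ‖U‖ :=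
  stmt_14_general n S U P hP hsol ca ds hca hds
end
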